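/- arXiv:2212.04383 — 7 statements merged into one kernel-verified Lean document; each statement's English description precedes it below -/
import Mathlib

section
/- Generalized Faulhaber formula (first form): for all integers m ≥ 1 and n ≥ 0, Σ_{j=0}^{m−1} P_{f,n}(x+j) = (C_{f,n+1}(x+m) − C_{f,n+1}(x))/(n+1). -/
/-- The Appell polynomials associated to a coefficient sequence `c`. -/
noncomputable def appell (c : ℕ → ℝ) (n : ℕ) (x : ℝ) : ℝ :=
  ∑ k ∈ Finset.range (n + 1), (n.choose k : ℝ) * c k * x ^ (n - k)

/-! Pass to exponential generating functions: `appell c · x` is generated by `f(t) e^{xt}` with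
`f = egf c`, and the hypothesis on `P` says `t p(t) = (e^t - 1) f(t)` for `p = egf P`. Hence
`t ∑_{j<m} p(t) e^{(x+j)t} = f(t) (e^{(x+m)t} - e^{xt})` by telescoping, and comparing the
coefficients of `t^{n+1}` gives the formula. -/

open Finset PowerSeries
open scoped Nat

namespace Appell

noncomputable def egf (a : ℕ → ℝ) : PowerSeries ℝ := PowerSeries.mk fun n => a n / n !

lemma coeff_egf_mul_rescale_exp (c : ℕ → ℝ) (x : ℝ) (n : ℕ) :
    coeff n (egf c * rescale x (exp ℝ)) = appell c n x / n ! := by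
  rw [coeff_mul, Nat.sum_antidiagonal_eq_sum_range_succ_mk, appell, sum_div]
  refine sum_congr rfl fun k hk => ?_
  have hkn : k ≤ n := Nat.lt_succ_iff.mp (mem_range.mp hk)
  simp only [egf, coeff_mk, coeff_rescale, coeff_exp, map_div₀, map_one, map_natCast,
    Nat.cast_choose ℝ hkn]
  field_simp [(n - k).factorial_ne_zero]

lemma X_mul_egf_eq {c P : ℕ → ℝ}
    (hP : ∀ n : ℕ, ((n : ℝ) + 1) * P n
      = ∑ k ∈ range (n + 1), ((n + 1).choose k : ℝ) * c k) :
    X * egf P = egf c * (exp ℝ - 1) := by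
  ext (_ | n)
  · simp [egf]
  · have hexp := coeff_egf_mul_rescale_exp c 1 (n + 1)
    rw [rescale_one, RingHom.id_apply] at hexp
    rw [coeff_succ_X_mul, mul_sub, mul_one, map_sub, hexp, appell, sum_range_succ]
    simp only [one_pow, mul_one, ← hP, egf, coeff_mk, Nat.choose_self, Nat.factorial_succ]
    push_cast
    field_simp
    ring

lemma exp_sub_one_mul_sum_rescale_exp {A : Type*} [CommRing A] [Algebra ℚ A] (x : A) (m : ℕ) :
    (exp A - 1) * ∑ j ∈ range m, rescale (x + j) (exp A)
      = rescale (x + m) (exp A) - rescale x (exp A) := by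
  have hstep (y : A) : rescale y (exp A) * exp A = rescale (y + 1) (exp A) := by
    rw [← exp_mul_exp_eq_exp_add, rescale_one, RingHom.id_apply]
  rw [mul_comm, mul_sub, mul_one, sum_mul, ← sum_sub_distrib]
  simp only [hstep]
  simpa [add_assoc] using sum_range_sub (fun j : ℕ => rescale (x + j) (exp A)) m

end Appell

open Appell in
theorem statement10_general (c P : ℕ → ℝ)
    (hP : ∀ n : ℕ, ((n : ℝ) + 1) * P n
      = ∑ k ∈ Finset.range (n + 1), ((n + 1).choose k : ℝ) * c k)
    (m : ℕ) (n : ℕ) (x : ℝ) :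
    ∑ j ∈ Finset.range m, appell P n (x + j)
      = (appell c (n + 1) (x + m) - appell c (n + 1) x) / ((n : ℝ) + 1) := by
  have hgf : X * ∑ j ∈ range m, egf P * rescale (x + j) (exp ℝ)
      = egf c * rescale (x + m) (exp ℝ) - egf c * rescale x (exp ℝ) := by
    rw [← mul_sum, ← mul_assoc, X_mul_egf_eq hP, mul_assoc,
      exp_sub_one_mul_sum_rescale_exp, mul_sub]
  have hcoeff := congrArg (coeff (n + 1)) hgf
  simp only [coeff_succ_X_mul, map_sum, map_sub, coeff_egf_mul_rescale_exp,
    ← sum_div, Nat.factorial_succ, Nat.cast_mul] at hcoeff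
  rw [eq_div_iff (by positivity)]
  field_simp at hcoeff
  push_cast at hcoeff
  linear_combination hcoeff

/-- generalized Faulhaber formula, first form:
`∑_{j=0}^{m−1} P_{f,n}(x+j) = (C_{f,n+1}(x+m) − C_{f,n+1}(x))/(n+1)`. -/
theorem statement10 (c P : ℕ → ℝ)
    (hP : ∀ n : ℕ, ((n : ℝ) + 1) * P n
      = ∑ k ∈ Finset.range (n + 1), ((n + 1).choose k : ℝ) * c k)
    (m : ℕ) (hm : 1 ≤ m) (n : ℕ) (x : ℝ) :
    ∑ j ∈ Finset.range m, appell P n (x + j)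
      = (appell c (n + 1) (x + m) - appell c (n + 1) x) / ((n : ℝ) + 1) :=
  statement10_general c P hP m n x
end

section
/- Generalized Faulhaber formula (second form): for all integers m ≥ 1 and n ≥ 0, Σ_{j=0}^{m−1} P_{f,n}(x+j) = (1/(n+1)) Σ_{k=0}^{n} C(n+1,k) · C_{f,k}(x) · m^{n+1−k}. -/
open Finset

theorem appell_add (c : ℕ → ℝ) (n : ℕ) (x y : ℝ) :
    appell c n (x + y) = ∑ k ∈ range (n + 1), (n.choose k : ℝ) * appell c k x * y ^ (n - k) := by
  let f : ℕ → ℕ → ℝ := fun k i =>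
    (n.choose (k + i) : ℝ) * ((k + i).choose k * c k * x ^ i) * y ^ (n - (k + i))
  calc appell c n (x + y) = ∑ k ∈ range (n + 1), ∑ i ∈ range (n + 1 - k), f k i := by
        refine sum_congr rfl fun k hk => ?_
        rw [add_pow, mul_sum, Nat.sub_add_comm (Nat.lt_succ_iff.mp (mem_range.mp hk))]
        refine sum_congr rfl fun i _ => ?_
        have hchoose := Nat.choose_mul (n := n) (Nat.le_add_right k i)
        rw [Nat.add_sub_cancel_left] at hchoose
        have hchoose' :
            (n.choose (k + i) : ℝ) * (k + i).choose k = n.choose k * (n - k).choose i := by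
          exact_mod_cast hchoose
        simp only [f, Nat.sub_add_eq]
        linear_combination (-c k * x ^ i * y ^ (n - k - i)) * hchoose'
    _ = ∑ K ∈ range (n + 1), ∑ k ∈ range (K + 1), f k (K - k) := (sum_range_diag_flip _ f).symm
    _ = _ := by
        refine sum_congr rfl fun K _ => ?_
        rw [appell, mul_sum, sum_mul]
        refine sum_congr rfl fun k hk => ?_
        simp only [f, Nat.add_sub_cancel' (Nat.lt_succ_iff.mp (mem_range.mp hk))]

theorem add_one_pow_sub_pow {R : Type*} [CommRing R] (x : R) (N : ℕ) :
    (x + 1) ^ N - x ^ N = ∑ b ∈ range N, (N.choose (b + 1) : R) * x ^ (N - (b + 1)) := by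
  rw [add_comm, add_pow, sum_range_succ']
  simp [mul_comm]

theorem appell_succ_add_one_sub (c : ℕ → ℝ) (n : ℕ) (x : ℝ) :
    appell c (n + 1) (x + 1) - appell c (n + 1) x
      = ∑ i ∈ range (n + 1), ((n + 1).choose i : ℝ) * c i
          * ∑ b ∈ range (n + 1 - i),
              ((n + 1 - i).choose (b + 1) : ℝ) * x ^ (n + 1 - i - (b + 1)) := by
  rw [appell, appell, ← sum_sub_distrib, sum_range_succ]
  simp only [Nat.sub_self, pow_zero, sub_self, add_zero, ← mul_sub, add_one_pow_sub_pow]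

theorem add_one_mul_appell_eq_sub (c P : ℕ → ℝ)
    (hP : ∀ n : ℕ, ((n : ℝ) + 1) * P n
      = ∑ k ∈ range (n + 1), ((n + 1).choose k : ℝ) * c k)
    (n : ℕ) (x : ℝ) :
    ((n : ℝ) + 1) * appell P n x = appell c (n + 1) (x + 1) - appell c (n + 1) x := by
  -- Both sides rearrange to `∑ᵢ (n+1 choose i) cᵢ ((x + 1)^(n+1-i) - x^(n+1-i))`.
  let g : ℕ → ℕ → ℝ := fun i b =>
    ((n + 1).choose (i + b + 1) : ℝ) * ((i + b + 1).choose i * c i) * x ^ (n - (i + b))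
  calc ((n : ℝ) + 1) * appell P n x
      = ∑ j ∈ range (n + 1), ((n + 1).choose (j + 1) : ℝ) * ((j + 1) * P j) * x ^ (n - j) := by
        rw [appell, mul_sum]
        refine sum_congr rfl fun j _ => ?_
        have h := Nat.add_one_mul_choose_eq n j
        have h' : ((n : ℝ) + 1) * n.choose j = (n + 1).choose (j + 1) * (j + 1) := by
          exact_mod_cast h
        linear_combination (P j * x ^ (n - j)) * h'
    _ = ∑ j ∈ range (n + 1), ∑ i ∈ range (j + 1), g i (j - i) := by
        refine sum_congr rfl fun j _ => ?_
        rw [hP, mul_sum, sum_mul]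
        refine sum_congr rfl fun i hi => ?_
        simp only [g, Nat.add_sub_cancel' (Nat.lt_succ_iff.mp (mem_range.mp hi))]
    _ = ∑ i ∈ range (n + 1), ∑ b ∈ range (n + 1 - i), g i b := sum_range_diag_flip _ g
    _ = _ := by
        rw [appell_succ_add_one_sub]
        refine sum_congr rfl fun i _ => ?_
        rw [mul_sum]
        refine sum_congr rfl fun b _ => ?_
        have hchoose := Nat.choose_mul (n := n + 1) (Nat.le_add_right i (b + 1))
        rw [Nat.add_sub_cancel_left] at hchoose
        have hchoose' : ((n + 1).choose (i + b + 1) : ℝ) * (i + b + 1).choose i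
            = (n + 1).choose i * (n + 1 - i).choose (b + 1) := by
          exact_mod_cast hchoose
        have hexp : n + 1 - i - (b + 1) = n - (i + b) := by omega
        simp only [g, hexp]
        linear_combination (c i * x ^ (n - (i + b))) * hchoose'

theorem statement11_general (c P : ℕ → ℝ)
    (hP : ∀ n : ℕ, ((n : ℝ) + 1) * P n
      = ∑ k ∈ Finset.range (n + 1), ((n + 1).choose k : ℝ) * c k)
    (m : ℕ) (n : ℕ) (x : ℝ) :
    ∑ j ∈ Finset.range m, appell P n (x + j)
      = (1 / ((n : ℝ) + 1)) *
          ∑ k ∈ Finset.range (n + 1),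
            ((n + 1).choose k : ℝ) * appell c k x * (m : ℝ) ^ (n + 1 - k) := by
  have htelescope : ((n : ℝ) + 1) * ∑ j ∈ range m, appell P n (x + j)
      = appell c (n + 1) (x + m) - appell c (n + 1) x := by
    rw [mul_sum]
    simp_rw [add_one_mul_appell_eq_sub c P hP, add_assoc]
    simpa using sum_range_sub (fun j : ℕ => appell c (n + 1) (x + j)) m
  have htranslate := appell_add c (n + 1) x m
  rw [sum_range_succ, Nat.choose_self, Nat.sub_self, pow_zero, Nat.cast_one, one_mul, mul_one]
    at htranslate
  rw [htranslate, add_sub_cancel_right] at htelescope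
  rw [← htelescope, one_div, inv_mul_cancel_left₀ (by positivity)]

/-- generalized Faulhaber formula, second form:
`∑_{j=0}^{m−1} P_{f,n}(x+j) = (1/(n+1)) ∑_{k=0}^n (n+1 choose k) C_{f,k}(x) m^{n+1−k}`. -/
theorem statement11 (c P : ℕ → ℝ)
    (hP : ∀ n : ℕ, ((n : ℝ) + 1) * P n
      = ∑ k ∈ Finset.range (n + 1), ((n + 1).choose k : ℝ) * c k)
    (m : ℕ) (hm : 1 ≤ m) (n : ℕ) (x : ℝ) :
    ∑ j ∈ Finset.range m, appell P n (x + j)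
      = (1 / ((n : ℝ) + 1)) *
          ∑ k ∈ Finset.range (n + 1),
            ((n + 1).choose k : ℝ) * appell c k x * (m : ℝ) ^ (n + 1 - k) :=
  statement11_general c P hP m n x
end

section
/- Multiplication formula for C-polynomials: for all integers n ≥ 0 and m ≥ 1, Σ_{k=0}^{m−1} C_{f,n}((x+k)/m) = m^{1−n} · C_{g,n}(x), where g(t) = ((e^{mt}−1)/(m(e^t−1))) f(mt). -/
/-!
Both sides are `n!` times the `n`-th Taylor coefficient at `0` of the same function. Summing the
generating functions of the `C_{f,n}((x+k)/m)` over `k` gives `F t · Σₖ e^{(x+k)t/m}`, a geometric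
sum equal to `m · G(t/m) · e^{xt/m}` for `t ≠ 0`; substituting `t/m` in the generating function
of the `C_{g,n}(x)` expands the latter with coefficients `m^{1-n} C_{g,n}(x)/n!`. Since `G` is only
related to `F` away from `0`, the two power series are compared through the continuity of their
sums at `0`.
-/

open Filter Topology FormalMultilinearSeries

section PowerSeries

variable {𝕜 : Type*} [NontriviallyNormedField 𝕜]

theorem hasFPowerSeriesAt_ofScalars_of_hasSum {c : ℕ → 𝕜} {S : 𝕜 → 𝕜} {r : ℝ} (hr : 0 < r)
    (h : ∀ t : 𝕜, ‖t‖ < r → HasSum (fun n => c n * t ^ n) (S t)) :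
    HasFPowerSeriesAt S (ofScalars 𝕜 c) 0 := by
  obtain ⟨t₀, ht₀, ht₀r⟩ := NormedField.exists_norm_lt 𝕜 hr
  refine ⟨‖t₀‖₊, ?_, by simpa using ht₀, fun {y} hy => ?_⟩
  · refine (ofScalars 𝕜 c).le_radius_of_tendsto (l := 0) ?_
    simpa [ofScalars_norm, norm_mul, norm_pow] using (h t₀ ht₀r).summable.tendsto_atTop_zero.norm
  · rw [Metric.eball_coe, mem_ball_zero_iff] at hy
    simpa [ofScalars_apply_eq, mul_comm] using h y (hy.trans ht₀r)

theorem eq_of_hasSum_pow_of_eventuallyEq_nhdsNE {c d : ℕ → 𝕜} {S T : 𝕜 → 𝕜} {r : ℝ}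
    (hr : 0 < r) (hS : ∀ t : 𝕜, ‖t‖ < r → HasSum (fun n => c n * t ^ n) (S t))
    (hT : ∀ t : 𝕜, ‖t‖ < r → HasSum (fun n => d n * t ^ n) (T t)) (hST : S =ᶠ[𝓝[≠] 0] T) :
    c = d := by
  have hc := hasFPowerSeriesAt_ofScalars_of_hasSum hr hS
  have hd := hasFPowerSeriesAt_ofScalars_of_hasSum hr hT
  have hST' := (hc.continuousAt.eventuallyEq_nhds_iff_eventuallyEq_nhdsNE hd.continuousAt).mp hST
  exact ofScalars_series_injective 𝕜 (E := 𝕜) (hc.eq_formalMultilinearSeries_of_eventually hd hST')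

end PowerSeries

theorem HasSum.rescale_pow_div {K : Type*} [Field K] [TopologicalSpace K]
    [IsTopologicalSemiring K] {a : ℕ → K} {c t s : K} (hc : c ≠ 0)
    (h : HasSum (fun j => a j * (t / c) ^ j) s) :
    HasSum (fun j : ℕ => c ^ (1 - (j : ℤ)) * a j * t ^ j) (c * s) := by
  refine (h.mul_left c).congr_fun fun j => ?_
  rw [zpow_sub₀ hc, zpow_one, zpow_natCast, div_pow]
  field_simp

theorem Real.sum_range_exp_add_div_mul (x t : ℝ) {m : ℕ} (hm : m ≠ 0) (ht : t ≠ 0) :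
    ∑ k ∈ Finset.range m, Real.exp ((x + k) / m * t)
      = Real.exp (x * (t / m)) * (Real.exp t - 1) / (Real.exp (t / m) - 1) := by
  have hq : Real.exp (t / m) ≠ 1 := by simp [ht, hm]
  have hqm : Real.exp (t / m) ^ m = Real.exp t := by
    rw [← Real.exp_nat_mul]; field_simp
  calc ∑ k ∈ Finset.range m, Real.exp ((x + k) / m * t)
      = Real.exp (x * (t / m)) * ∑ k ∈ Finset.range m, Real.exp (t / m) ^ k := by
        rw [Finset.mul_sum]
        refine Finset.sum_congr rfl fun k _ => ?_
        rw [← Real.exp_nat_mul, ← Real.exp_add]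
        ring_nf
    _ = _ := by rw [geom_sum_eq hq, hqm, mul_div_assoc]

/-- multiplication formula for the C-polynomials: if `Cf` and `Cg` are the
C-polynomial families of `F` and of `G t = ((e^{mt}−1)/(m(e^t−1))) F(mt)` respectively
(given by their exponential generating functions on `|t| < R`, resp. `|t| < R'`, with
positive radii), then for `m ≥ 1`,
`∑_{k=0}^{m−1} C_{f,n}((x+k)/m) = m^{1−n} C_{g,n}(x)`. -/
theorem statement13 (F G : ℝ → ℝ) (Cf Cg : ℕ → ℝ → ℝ) (R R' : ℝ) (hR : 0 < R) (hR' : 0 < R')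
    (m : ℕ) (hm : 1 ≤ m)
    (hCf : ∀ x t : ℝ, |t| < R →
      HasSum (fun n : ℕ => Cf n x / n.factorial * t ^ n) (F t * Real.exp (x * t)))
    (hCg : ∀ x t : ℝ, |t| < R' →
      HasSum (fun n : ℕ => Cg n x / n.factorial * t ^ n) (G t * Real.exp (x * t)))
    (hG : ∀ t : ℝ, |t| < R' → t ≠ 0 →
      G t = (Real.exp (m * t) - 1) / (m * (Real.exp t - 1)) * F (m * t)) :
    ∀ (n : ℕ) (x : ℝ),
      ∑ k ∈ Finset.range m, Cf n ((x + k) / m)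
        = (m : ℝ) ^ (1 - (n : ℤ)) * Cg n x := by
  intro n x
  have hm₀ : (0 : ℝ) < m := by exact_mod_cast hm
  obtain ⟨r, hr, hrR, hrR'⟩ : ∃ r, 0 < r ∧ r ≤ R ∧ r ≤ m * R' :=
    ⟨min R (m * R'), lt_min hR (by positivity), min_le_left _ _, min_le_right _ _⟩
  have hR'_of_lt : ∀ t : ℝ, ‖t‖ < r → |t / m| < R' := fun t ht => by
    rw [abs_div, Nat.abs_cast, div_lt_iff₀' hm₀]
    exact ht.trans_le hrR'
  have hsum : ∀ t : ℝ, ‖t‖ < r →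
      HasSum (fun j => (∑ k ∈ Finset.range m, Cf j ((x + k) / m)) / j.factorial * t ^ j)
        (F t * ∑ k ∈ Finset.range m, Real.exp ((x + k) / m * t)) := fun t ht => by
    simp only [Finset.sum_div, Finset.sum_mul, Finset.mul_sum]
    exact hasSum_sum fun k _ => by
      simpa only [mul_comm _ t] using hCf _ t (ht.trans_le hrR)
  have heq : (fun t => F t * ∑ k ∈ Finset.range m, Real.exp ((x + k) / m * t))
      =ᶠ[𝓝[≠] 0] fun t => m * (G (t / m) * Real.exp (x * (t / m))) := by
    filter_upwards [self_mem_nhdsWithin, nhdsWithin_le_nhds (Metric.ball_mem_nhds 0 hr)]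
      with t ht htr
    have ht' : t ≠ 0 := ht
    rw [hG _ (hR'_of_lt t (mem_ball_zero_iff.mp htr)) (div_ne_zero ht' hm₀.ne'),
      mul_div_cancel₀ _ hm₀.ne', Real.sum_range_exp_add_div_mul x t (by omega) ht']
    have : Real.exp (t / m) - 1 ≠ 0 := by simpa [sub_eq_zero] using div_ne_zero ht' hm₀.ne'
    field_simp
  have hcoeff := congrFun (eq_of_hasSum_pow_of_eventuallyEq_nhdsNE hr hsum
    (fun t ht => (hCg x (t / m) (hR'_of_lt t ht)).rescale_pow_div hm₀.ne') heq) n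
  rw [mul_div_assoc'] at hcoeff
  exact (div_left_inj' (Nat.cast_ne_zero.mpr n.factorial_ne_zero)).mp hcoeff
end

section
/- If z is a complex number not in the nonnegative integers and the power series Σ u_n s^n has radius of convergence ρ ∈ (0, ∞], then the power series Σ C(z,n) u_n s^n (with generalized binomial coefficients) also has radius of convergence ρ. -/
/-!
Since `C(z, n+1) / C(z, n) = (z - n) / (n + 1) → -1`, the coefficients `C(z, n)` are nonzero
(as `z ∉ ℕ`) and, by the ratio test, both `C(z, n)` and `C(z, n)⁻¹` are `O(rⁿ)` for every
`r > 1`. Multiplying the coefficients of a power series by such a sequence cannot shrink its disc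
of convergence; applied to `C(z, n)` and to `C(z, n)⁻¹` this gives both inclusions.
-/

open scoped ENNReal NNReal

/-- The generalized binomial coefficient `C(z,n) = z(z−1)⋯(z−n+1)/n!`. -/
noncomputable def genBinom (z : ℂ) (n : ℕ) : ℂ :=
  (∏ i ∈ Finset.range n, (z - i)) / (n.factorial : ℂ)

open Filter Topology Asymptotics

section SubexponentialGrowth

variable {𝕜 : Type*} [NormedField 𝕜]

theorem isBigO_pow_of_norm_ratio_tendsto_one {a : ℕ → 𝕜} (ha : ∀ᶠ n in atTop, a n ≠ 0)
    (hratio : Tendsto (fun n => ‖a (n + 1)‖ / ‖a n‖) atTop (𝓝 1)) {r : ℝ} (hr : 1 < r) :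
    a =O[atTop] fun n => r ^ n := by
  have hr₀ : 0 < r := one_pos.trans hr
  set f : ℕ → ℝ := fun n => ‖a n‖ / r ^ n
  have hf_ratio : ∀ n, ‖f (n + 1)‖ / ‖f n‖ = ‖a (n + 1)‖ / ‖a n‖ / r := by
    intro n
    simp only [f, norm_div, norm_norm, norm_pow, Real.norm_of_nonneg hr₀.le]
    rw [pow_succ]
    field_simp
  have hf : Summable f := by
    refine summable_of_ratio_test_tendsto_lt_one (inv_lt_one_of_one_lt₀ hr) ?_ ?_
    · filter_upwards [ha] with n hn
      exact div_ne_zero (norm_ne_zero_iff.mpr hn) (pow_ne_zero _ hr₀.ne')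
    · simpa only [hf_ratio, one_div] using hratio.div_const r
  have hf_bdd : f =O[atTop] fun _ => (1 : ℝ) := hf.tendsto_atTop_zero.isBigO_one ℝ
  refine isBigO_norm_left.mp ?_
  calc (fun n => ‖a n‖) = fun n => f n * r ^ n := by
        ext n; simp only [f, div_mul_cancel₀ _ (pow_ne_zero n hr₀.ne')]
    _ =O[atTop] fun n => 1 * r ^ n := hf_bdd.mul (isBigO_refl _ _)
    _ = fun n => r ^ n := by simp only [one_mul]

theorem tendsto_norm_ratio_inv {a : ℕ → 𝕜} {l : ℝ}
    (hratio : Tendsto (fun n => ‖a (n + 1)‖ / ‖a n‖) atTop (𝓝 l)) (hl : l ≠ 0) :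
    Tendsto (fun n => ‖(a (n + 1))⁻¹‖ / ‖(a n)⁻¹‖) atTop (𝓝 l⁻¹) := by
  simpa only [norm_inv, inv_div_inv, inv_div] using hratio.inv₀ hl

variable [CompleteSpace 𝕜]

theorem summable_mul_mul_pow_of_isBigO {a v : ℕ → 𝕜}
    (ha : ∀ r : ℝ, 1 < r → a =O[atTop] fun n => r ^ n) {s c : 𝕜} (hsc : ‖s‖ < ‖c‖)
    (hv : Summable fun n => v n * c ^ n) :
    Summable fun n => a n * v n * s ^ n := by
  obtain ⟨t, hst, htc⟩ := exists_between hsc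
  have ht : 0 < t := (norm_nonneg s).trans_lt hst
  have hc : c ≠ 0 := norm_pos_iff.mp (ht.trans htc)
  have hq : ‖c‖ / t * ‖s / c‖ = ‖s‖ / t := by
    rw [norm_div]; field_simp
  have hv_bdd : (fun n => v n * c ^ n) =O[atTop] fun _ => (1 : ℝ) :=
    hv.tendsto_atTop_zero.isBigO_one ℝ
  have hgeom : (fun n => (s / c) ^ n) =O[atTop] fun n => ‖s / c‖ ^ n :=
    isBigO_of_le _ fun n => by simp [norm_pow]
  refine summable_of_isBigO_nat (summable_geometric_of_lt_one (by positivity)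
    ((div_lt_one ht).mpr hst)) ?_
  calc (fun n => a n * v n * s ^ n) = fun n => a n * (v n * c ^ n) * (s / c) ^ n := by
        ext n; rw [div_pow]; field_simp
    _ =O[atTop] fun n => (‖c‖ / t) ^ n * 1 * ‖s / c‖ ^ n :=
        ((ha _ ((one_lt_div ht).mpr htc)).mul hv_bdd).mul hgeom
    _ = fun n => (‖s‖ / t) ^ n := by
        ext n; rw [mul_one, ← mul_pow, hq]

end SubexponentialGrowth

theorem genBinom_succ (z : ℂ) (n : ℕ) :
    genBinom z (n + 1) = genBinom z n * ((z - n) / (n + 1)) := by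
  unfold genBinom
  rw [Finset.prod_range_succ, Nat.factorial_succ]
  push_cast
  field_simp

theorem genBinom_ne_zero {z : ℂ} (hz : ∀ n : ℕ, z ≠ n) (n : ℕ) : genBinom z n ≠ 0 :=
  div_ne_zero (Finset.prod_ne_zero_iff.mpr fun i _ => sub_ne_zero.mpr (hz i))
    (Nat.cast_ne_zero.mpr n.factorial_ne_zero)

theorem tendsto_genBinom_norm_ratio {z : ℂ} (hz : ∀ n : ℕ, z ≠ n) :
    Tendsto (fun n => ‖genBinom z (n + 1)‖ / ‖genBinom z n‖) atTop (𝓝 1) := by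
  have hlim : Tendsto (fun n : ℕ => (z + -1 * n) / (1 + 1 * n)) atTop (𝓝 (-1 / 1)) :=
    tendsto_add_mul_div_add_mul_atTop_nhds z 1 (-1) one_ne_zero
  convert hlim.norm using 1
  · ext n
    rw [genBinom_succ, norm_mul,
      mul_div_cancel_left₀ _ (norm_ne_zero_iff.mpr (genBinom_ne_zero hz n))]
    ring_nf
  · simp

theorem genBinom_isBigO_pow {z : ℂ} (hz : ∀ n : ℕ, z ≠ n) {r : ℝ} (hr : 1 < r) :
    genBinom z =O[atTop] fun n => r ^ n :=
  isBigO_pow_of_norm_ratio_tendsto_one (.of_forall (genBinom_ne_zero hz))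
    (tendsto_genBinom_norm_ratio hz) hr

theorem genBinom_inv_isBigO_pow {z : ℂ} (hz : ∀ n : ℕ, z ≠ n) {r : ℝ} (hr : 1 < r) :
    (fun n => (genBinom z n)⁻¹) =O[atTop] fun n => r ^ n :=
  isBigO_pow_of_norm_ratio_tendsto_one (.of_forall fun n => inv_ne_zero (genBinom_ne_zero hz n))
    (by simpa using tendsto_norm_ratio_inv (tendsto_genBinom_norm_ratio hz) one_ne_zero) hr

theorem Complex.exists_nnnorm_btwn {a b : ℝ≥0∞} (hab : a < b) :
    ∃ w : ℂ, a < ‖w‖₊ ∧ (‖w‖₊ : ℝ≥0∞) < b := by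
  obtain ⟨c, hac, hcb⟩ := ENNReal.lt_iff_exists_nnreal_btwn.mp hab
  refine ⟨((c : ℝ) : ℂ), ?_⟩
  rw [Complex.nnnorm_real, NNReal.nnnorm_eq]
  exact ⟨hac, hcb⟩

theorem statement14_general (u : ℕ → ℝ) (ρ : ℝ≥0∞)
    (z : ℂ) (hz : ∀ n : ℕ, z ≠ (n : ℂ))
    (h1 : ∀ s : ℂ, (‖s‖₊ : ℝ≥0∞) < ρ → Summable (fun n : ℕ => (u n : ℂ) * s ^ n))
    (h2 : ∀ s : ℂ, ρ < (‖s‖₊ : ℝ≥0∞) → ¬ Summable (fun n : ℕ => (u n : ℂ) * s ^ n)) :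
    (∀ s : ℂ, (‖s‖₊ : ℝ≥0∞) < ρ →
        Summable (fun n : ℕ => genBinom z n * (u n : ℂ) * s ^ n)) ∧
    (∀ s : ℂ, ρ < (‖s‖₊ : ℝ≥0∞) →
        ¬ Summable (fun n : ℕ => genBinom z n * (u n : ℂ) * s ^ n)) := by
  constructor
  · intro s hs
    obtain ⟨w, hsw, hwρ⟩ := Complex.exists_nnnorm_btwn hs
    exact summable_mul_mul_pow_of_isBigO (fun _ => genBinom_isBigO_pow hz)
      (by exact_mod_cast hsw) (h1 w hwρ)
  · intro s hs hsum
    obtain ⟨w, hρw, hws⟩ := Complex.exists_nnnorm_btwn hs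
    refine h2 w hρw ?_
    have hinv := summable_mul_mul_pow_of_isBigO (v := fun n => genBinom z n * u n)
      (fun _ => genBinom_inv_isBigO_pow hz) (by exact_mod_cast hws) hsum
    simpa only [inv_mul_cancel_left₀ (genBinom_ne_zero hz _)] using hinv

/-- if `z ∉ ℤ_{≥0}` and `∑ u_n s^n` has radius of convergence `ρ ∈ (0,∞]`,
then `∑ C(z,n) u_n s^n` also has radius of convergence `ρ` (radius of convergence is
expressed by summability for `‖s‖ < ρ` and divergence for `‖s‖ > ρ`). -/
theorem statement14 (u : ℕ → ℝ) (ρ : ℝ≥0∞) (hρ : 0 < ρ)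
    (z : ℂ) (hz : ∀ n : ℕ, z ≠ (n : ℂ))
    (h1 : ∀ s : ℂ, (‖s‖₊ : ℝ≥0∞) < ρ → Summable (fun n : ℕ => (u n : ℂ) * s ^ n))
    (h2 : ∀ s : ℂ, ρ < (‖s‖₊ : ℝ≥0∞) → ¬ Summable (fun n : ℕ => (u n : ℂ) * s ^ n)) :
    (∀ s : ℂ, (‖s‖₊ : ℝ≥0∞) < ρ →
        Summable (fun n : ℕ => genBinom z n * (u n : ℂ) * s ^ n)) ∧
    (∀ s : ℂ, ρ < (‖s‖₊ : ℝ≥0∞) →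
        ¬ Summable (fun n : ℕ => genBinom z n * (u n : ℂ) * s ^ n)) :=
  statement14_general u ρ z hz h1 h2
end

section
/- For Re(z) > 0 and Re(s) > 1/ρ, the integral ∫_0^∞ t^{z−1} e^{−st} u(−t) dt converges and equals Γ(z) · Σ_{n=0}^∞ C(−z,n) u_n s^{−z−n}, where u(t) = Σ_{n≥0} (u_n/n!) t^n. -/
/-!
Write `u(-t) = ∑ cₙ tⁿ` with `cₙ = (-1)ⁿ uₙ / n!`. Choosing `1/ρ < b < Re s`, summability of
`∑ uₙ b⁻ⁿ` gives `|uₙ| ≤ A bⁿ`, hence `∑ |cₙ| tⁿ ≤ A e^{bt}`. Against the kernel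
`t^{z-1} e^{-st}` this majorant is integrable because `Re s > b`, so the partial sums of
`∑ₙ ∫ |t^{z-1} e^{-st} cₙ tⁿ|` are bounded and the integral may be computed term by term.
Each term is the Laplace transform `∫₀^∞ t^{z+n-1} e^{-st} dt = Γ(z+n) s^{-z-n}`, and
`(-1)ⁿ Γ(z+n) / n! = Γ(z) C(-z,n)`.
-/

open scoped ENNReal NNReal
open MeasureTheory

/-- The entire function `u(t) = ∑ u_n/n! t^n` attached to the sequence `u_n`. -/
noncomputable def ufun (u : ℕ → ℝ) (t : ℝ) : ℝ :=
  ∑' n : ℕ, u n / n.factorial * t ^ n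

open Set Filter Topology
open scoped Nat

lemma integrableOn_rpow_mul_exp_neg_mul {r b : ℝ} (hr : -1 < r) (hb : 0 < b) :
    IntegrableOn (fun t : ℝ => t ^ r * Real.exp (-(b * t))) (Ioi 0) := by
  simpa using integrableOn_rpow_mul_exp_neg_mul_rpow hr one_pos hb

lemma norm_cpow_mul_exp_neg_mul {t : ℝ} (ht : 0 < t) (a s : ℂ) :
    ‖(t : ℂ) ^ a * Complex.exp (-s * t)‖ = t ^ a.re * Real.exp (-(s.re * t)) := by
  rw [norm_mul, Complex.norm_cpow_eq_rpow_re_of_pos ht, Complex.norm_exp]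
  simp

lemma continuousOn_cpow_mul_exp_neg_mul (a s : ℂ) :
    ContinuousOn (fun t : ℝ => (t : ℂ) ^ a * Complex.exp (-s * t)) (Ioi 0) := by
  refine ContinuousOn.mul (fun t ht => ?_) (by fun_prop)
  exact ((continuousAt_cpow_const (Complex.ofReal_mem_slitPlane.2 ht)).comp
    Complex.continuous_ofReal.continuousAt).continuousWithinAt

lemma integrableOn_cpow_mul_exp_neg_mul {a s : ℂ} (ha : 0 < a.re) (hs : 0 < s.re) :
    IntegrableOn (fun t : ℝ => (t : ℂ) ^ (a - 1) * Complex.exp (-s * t)) (Ioi 0) := by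
  refine (integrableOn_rpow_mul_exp_neg_mul (by linarith : -1 < a.re - 1) hs).mono'
    ((continuousOn_cpow_mul_exp_neg_mul _ _).aestronglyMeasurable measurableSet_Ioi) ?_
  filter_upwards [ae_restrict_mem measurableSet_Ioi] with t ht
  rw [norm_cpow_mul_exp_neg_mul ht, Complex.sub_re, Complex.one_re]

lemma integral_cpow_mul_exp_neg_ofReal_mul {a : ℂ} (ha : 0 < a.re) {r : ℝ} (hr : 0 < r) :
    ∫ t in Ioi (0 : ℝ), (t : ℂ) ^ (a - 1) * Complex.exp (-r * t)
      = Complex.Gamma a * (r : ℂ) ^ (-a) := by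
  have h := Complex.integral_cpow_mul_exp_neg_mul_Ioi ha hr
  simp_rw [neg_mul] at h ⊢
  rw [h, one_div, Complex.inv_cpow _ _ (by simpa [Complex.arg_ofReal_of_nonneg hr.le]
    using Real.pi_ne_zero.symm), ← Complex.cpow_neg, mul_comm]

lemma differentiableOn_integral_cpow_mul_exp_neg_mul {a : ℂ} (ha : 0 < a.re) :
    DifferentiableOn ℂ (fun w : ℂ => ∫ t in Ioi (0 : ℝ), (t : ℂ) ^ (a - 1) * Complex.exp (-w * t))
      {w | 0 < w.re} := by
  intro w₀ hw₀
  have hε : 0 < w₀.re / 2 := half_pos hw₀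
  have hderiv := hasDerivAt_integral_of_dominated_loc_of_deriv_le (x₀ := w₀)
    (F := fun w t => (t : ℂ) ^ (a - 1) * Complex.exp (-w * t))
    (F' := fun w t => (t : ℂ) ^ (a - 1) * Complex.exp (-w * t) * (-t : ℂ))
    (bound := fun t : ℝ => t ^ a.re * Real.exp (-(w₀.re / 2 * t)))
    (μ := volume.restrict (Ioi 0)) (s := {w : ℂ | w₀.re / 2 < w.re})
    ((isOpen_lt continuous_const Complex.continuous_re).mem_nhds (by simp; linarith))
    (Eventually.of_forall fun w =>
      (continuousOn_cpow_mul_exp_neg_mul _ w).aestronglyMeasurable measurableSet_Ioi)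
    (integrableOn_cpow_mul_exp_neg_mul ha hw₀)
    (((continuousOn_cpow_mul_exp_neg_mul _ _).mul (by fun_prop)).aestronglyMeasurable
      measurableSet_Ioi)
    ?_ (integrableOn_rpow_mul_exp_neg_mul (by linarith) hε) ?_
  · exact hderiv.2.differentiableAt.differentiableWithinAt
  · filter_upwards [ae_restrict_mem measurableSet_Ioi] with t (ht : 0 < t) w (hw : _ < w.re)
    rw [norm_mul, norm_cpow_mul_exp_neg_mul ht, norm_neg, Complex.norm_real,
      Real.norm_of_nonneg ht.le, mul_right_comm, ← Real.rpow_add_one ht.ne', Complex.sub_re,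
      Complex.one_re, sub_add_cancel]
    gcongr
  · filter_upwards with t w _
    simpa [mul_assoc] using
      (((hasDerivAt_id w).neg.mul_const (t : ℂ)).cexp.const_mul ((t : ℂ) ^ (a - 1)))

theorem integral_cpow_mul_exp_neg_mul {a s : ℂ} (ha : 0 < a.re) (hs : 0 < s.re) :
    ∫ t in Ioi (0 : ℝ), (t : ℂ) ^ (a - 1) * Complex.exp (-s * t)
      = Complex.Gamma a * s ^ (-a) := by
  have hU : IsOpen {w : ℂ | 0 < w.re} := isOpen_lt continuous_const Complex.continuous_re
  have hrhs : DifferentiableOn ℂ (fun w : ℂ => Complex.Gamma a * w ^ (-a)) {w | 0 < w.re} :=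
    fun w hw => ((differentiableAt_id.cpow (differentiableAt_const _) (Or.inl hw)).const_mul
      _).differentiableWithinAt
  -- both sides are holomorphic in `s` and agree on the positive reals, which accumulate at `1`
  have hofReal : Tendsto (fun r : ℝ => (r : ℂ)) (𝓝[≠] 1) (𝓝[≠] 1) := by
    simpa using Complex.continuous_ofReal.continuousWithinAt.tendsto_nhdsWithin
      (s := {(1 : ℝ)}ᶜ) (t := {(1 : ℂ)}ᶜ) (x := 1) fun r hr => by simpa using hr
  have hreal : ∀ᶠ r : ℝ in 𝓝[≠] 1, ∫ t in Ioi (0 : ℝ), (t : ℂ) ^ (a - 1) *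
      Complex.exp (-r * t) = Complex.Gamma a * (r : ℂ) ^ (-a) :=
    eventually_nhdsWithin_of_eventually_nhds ((lt_mem_nhds one_pos).mono fun r hr =>
      integral_cpow_mul_exp_neg_ofReal_mul ha hr)
  have hlhs := (differentiableOn_integral_cpow_mul_exp_neg_mul ha).analyticOnNhd hU
  exact hlhs.eqOn_of_preconnected_of_frequently_eq (hrhs.analyticOnNhd hU)
    (convex_halfSpace_re_gt 0).isPreconnected (by simp) (hofReal.frequently hreal.frequently) hs

lemma cpow_mul_exp_neg_mul_mul_pow_eqOn (a s c : ℂ) (n : ℕ) :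
    EqOn (fun t : ℝ => (t : ℂ) ^ (a - 1) * Complex.exp (-s * t) * (c * (t : ℂ) ^ n))
      (fun t : ℝ => c * ((t : ℂ) ^ (a + n - 1) * Complex.exp (-s * t))) (Ioi 0) := by
  intro t (ht : 0 < t)
  have hpow : (t : ℂ) ^ (a + n - 1) = (t : ℂ) ^ (a - 1) * (t : ℂ) ^ n := by
    rw [← Complex.cpow_natCast, ← Complex.cpow_add _ _ (Complex.ofReal_ne_zero.2 ht.ne')]
    ring_nf
  simp only [hpow]
  ring

lemma re_add_natCast_pos {a : ℂ} (ha : 0 < a.re) (n : ℕ) : 0 < (a + n).re := by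
  simp only [Complex.add_re, Complex.natCast_re]
  positivity

lemma integrableOn_cpow_mul_exp_neg_mul_mul_pow {a s : ℂ} (ha : 0 < a.re) (hs : 0 < s.re)
    (c : ℂ) (n : ℕ) :
    IntegrableOn (fun t : ℝ => (t : ℂ) ^ (a - 1) * Complex.exp (-s * t) * (c * (t : ℂ) ^ n))
      (Ioi 0) :=
  IntegrableOn.congr_fun
    ((integrableOn_cpow_mul_exp_neg_mul (re_add_natCast_pos ha n) hs).const_mul c)
    (cpow_mul_exp_neg_mul_mul_pow_eqOn a s c n).symm measurableSet_Ioi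

lemma integral_cpow_mul_exp_neg_mul_mul_pow {a s : ℂ} (ha : 0 < a.re) (hs : 0 < s.re)
    (c : ℂ) (n : ℕ) :
    ∫ t in Ioi (0 : ℝ), (t : ℂ) ^ (a - 1) * Complex.exp (-s * t) * (c * (t : ℂ) ^ n)
      = c * (Complex.Gamma (a + n) * s ^ (-(a + n))) := by
  rw [setIntegral_congr_fun measurableSet_Ioi (cpow_mul_exp_neg_mul_mul_pow_eqOn a s c n),
    integral_const_mul, integral_cpow_mul_exp_neg_mul (re_add_natCast_pos ha n) hs]

lemma norm_cpow_mul_exp_neg_mul_mul_le {t : ℝ} (ht : 0 < t) (a s : ℂ) {A b x : ℝ}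
    (hx : x ≤ A * Real.exp (b * t)) :
    ‖(t : ℂ) ^ (a - 1) * Complex.exp (-s * t)‖ * x
      ≤ A * (t ^ (a.re - 1) * Real.exp (-((s.re - b) * t))) := by
  calc _ ≤ ‖(t : ℂ) ^ (a - 1) * Complex.exp (-s * t)‖ * (A * Real.exp (b * t)) := by gcongr
    _ = _ := by
      rw [norm_cpow_mul_exp_neg_mul ht, Complex.sub_re, Complex.one_re,
        show -((s.re - b) * t) = -(s.re * t) + b * t by ring, Real.exp_add]
      ring

section ExponentialType

variable {c : ℕ → ℂ} {A b : ℝ}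

lemma norm_mul_pow_le_of_norm_le (hc : ∀ n, ‖c n‖ ≤ A * b ^ n / n !) (t : ℝ) (n : ℕ) :
    ‖c n * (t : ℂ) ^ n‖ ≤ A * ((b * |t|) ^ n / n !) := by
  rw [norm_mul, norm_pow, Complex.norm_real, Real.norm_eq_abs, mul_pow]
  calc ‖c n‖ * |t| ^ n ≤ A * b ^ n / n ! * |t| ^ n := by gcongr; exact hc n
    _ = _ := by ring

lemma summable_norm_mul_pow (hc : ∀ n, ‖c n‖ ≤ A * b ^ n / n !) (t : ℝ) :
    Summable fun n => ‖c n * (t : ℂ) ^ n‖ :=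
  .of_nonneg_of_le (fun _ => norm_nonneg _) (norm_mul_pow_le_of_norm_le hc t)
    ((Real.summable_pow_div_factorial _).mul_left A)

lemma tsum_norm_mul_pow_le (hc : ∀ n, ‖c n‖ ≤ A * b ^ n / n !) (t : ℝ) :
    ∑' n, ‖c n * (t : ℂ) ^ n‖ ≤ A * Real.exp (b * |t|) :=
  hasSum_le (norm_mul_pow_le_of_norm_le hc t) (summable_norm_mul_pow hc t).hasSum
    ((Real.exp_eq_exp_ℝ ▸ NormedSpace.expSeries_div_hasSum_exp (b * |t|)).mul_left A)

lemma measurable_tsum_mul_pow (hc : ∀ n, ‖c n‖ ≤ A * b ^ n / n !) :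
    Measurable fun t : ℝ => ∑' n, c n * (t : ℂ) ^ n :=
  measurable_of_tendsto_metrizable (f := fun N (t : ℝ) => ∑ n ∈ Finset.range N, c n * (t : ℂ) ^ n)
    (fun N => by fun_prop) <| tendsto_pi_nhds.2 fun t =>
      (summable_norm_mul_pow hc t).of_norm.hasSum.tendsto_sum_nat

variable {z s : ℂ}

lemma integrableOn_cpow_mul_exp_neg_mul_mul_tsum (hc : ∀ n, ‖c n‖ ≤ A * b ^ n / n !)
    (hz : 0 < z.re) (hbs : b < s.re) :
    IntegrableOn (fun t : ℝ =>
      (t : ℂ) ^ (z - 1) * Complex.exp (-s * t) * ∑' n, c n * (t : ℂ) ^ n) (Ioi 0) := by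
  have hmajorant := (integrableOn_rpow_mul_exp_neg_mul (by linarith : -1 < z.re - 1)
    (sub_pos.2 hbs)).const_mul A
  refine hmajorant.mono'
    (((continuousOn_cpow_mul_exp_neg_mul _ _).aestronglyMeasurable measurableSet_Ioi).mul
      (measurable_tsum_mul_pow hc).aestronglyMeasurable) ?_
  filter_upwards [ae_restrict_mem measurableSet_Ioi] with t (ht : 0 < t)
  rw [norm_mul]
  refine norm_cpow_mul_exp_neg_mul_mul_le ht z s ?_
  simpa [abs_of_pos ht] using
    (norm_tsum_le_tsum_norm (summable_norm_mul_pow hc t)).trans (tsum_norm_mul_pow_le hc t)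

lemma summable_integral_norm_cpow_mul_exp_neg_mul_mul_pow (hc : ∀ n, ‖c n‖ ≤ A * b ^ n / n !)
    (hb : 0 ≤ b) (hz : 0 < z.re) (hbs : b < s.re) :
    Summable fun n => ∫ t in Ioi (0 : ℝ),
      ‖(t : ℂ) ^ (z - 1) * Complex.exp (-s * t) * (c n * (t : ℂ) ^ n)‖ := by
  have hint n := (integrableOn_cpow_mul_exp_neg_mul_mul_pow hz (hb.trans_lt hbs) (c n) n).norm
  refine summable_of_sum_range_le (c := ∫ t in Ioi (0 : ℝ),
    A * (t ^ (z.re - 1) * Real.exp (-((s.re - b) * t))))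
    (fun n => integral_nonneg fun _ => norm_nonneg _) fun N => ?_
  rw [← integral_finsetSum _ fun n _ => hint n]
  refine setIntegral_mono_on (integrable_finsetSum _ fun n _ => hint n)
    ((integrableOn_rpow_mul_exp_neg_mul (by linarith : -1 < z.re - 1) (sub_pos.2 hbs)).const_mul A)
    measurableSet_Ioi fun t (ht : 0 < t) => ?_
  simp_rw [norm_mul _ (c _ * _), ← Finset.mul_sum]
  refine norm_cpow_mul_exp_neg_mul_mul_le ht z s ?_
  simpa [abs_of_pos ht] using ((summable_norm_mul_pow hc t).sum_le_tsum _
    fun n _ => norm_nonneg _).trans (tsum_norm_mul_pow_le hc t)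

theorem hasSum_integral_cpow_mul_exp_neg_mul_mul_tsum (hc : ∀ n, ‖c n‖ ≤ A * b ^ n / n !)
    (hb : 0 ≤ b) (hz : 0 < z.re) (hbs : b < s.re) :
    HasSum (fun n => c n * (Complex.Gamma (z + n) * s ^ (-(z + n))))
      (∫ t in Ioi (0 : ℝ), (t : ℂ) ^ (z - 1) * Complex.exp (-s * t) * ∑' n, c n * (t : ℂ) ^ n) := by
  have hs : 0 < s.re := hb.trans_lt hbs
  have := hasSum_integral_of_summable_integral_norm
    (fun n => integrableOn_cpow_mul_exp_neg_mul_mul_pow hz hs (c n) n)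
    (summable_integral_norm_cpow_mul_exp_neg_mul_mul_pow hc hb hz hbs)
  simpa only [integral_cpow_mul_exp_neg_mul_mul_pow hz hs, tsum_mul_left] using this

end ExponentialType

lemma Complex.Gamma_mul_genBinom_neg {z : ℂ} (hz : ∀ k : ℕ, z ≠ -k) (n : ℕ) :
    Complex.Gamma z * genBinom (-z) n = (-1) ^ n * Complex.Gamma (z + n) / n ! := by
  have hΓ : Complex.Gamma (z + n) = Complex.Gamma z * (ascPochhammer ℂ n).eval z := by
    rw [← Complex.Gamma_add_nat_div_Gamma_eq z hz, mul_div_cancel₀ _ (Complex.Gamma_ne_zero hz)]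
  rw [genBinom, ← descPochhammer_eval_eq_prod_range, hΓ, ← neg_neg z,
    ascPochhammer_eval_neg_eq_descPochhammer, neg_neg]
  have hsign : ((-1 : ℂ) ^ n) * (-1) ^ n = 1 := by rw [← mul_pow]; simp
  linear_combination (-(Complex.Gamma z * (descPochhammer ℂ n).eval (-z) / n !)) * hsign

lemma exists_norm_le_mul_inv_pow_of_summable {a : ℕ → ℂ} {r : ℝ} (hr : 0 < r)
    (h : Summable fun n => a n * (r : ℂ) ^ n) : ∃ A, ∀ n, ‖a n‖ ≤ A * r⁻¹ ^ n := by
  obtain ⟨A, hA⟩ := h.tendsto_atTop_zero.norm.bddAbove_range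
  refine ⟨A, fun n => ?_⟩
  have hn : ‖a n‖ * r ^ n ≤ A := by
    simpa [norm_mul, abs_of_pos hr] using hA (mem_range_self n)
  rwa [inv_pow, ← div_eq_mul_inv, le_div_iff₀ (by positivity)]

lemma ENNReal.exists_ofReal_inv_lt_of_inv_toReal_lt {ρ : ℝ≥0∞} (hρ : 0 < ρ) {σ : ℝ}
    (hσ : (ρ⁻¹).toReal < σ) : ∃ b : ℝ, 0 < b ∧ b < σ ∧ ENNReal.ofReal b⁻¹ < ρ := by
  obtain ⟨b, hρb, hbσ⟩ := exists_between hσ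
  have hb : 0 < b := ENNReal.toReal_nonneg.trans_lt hρb
  refine ⟨b, hb, hbσ, ?_⟩
  rw [ENNReal.ofReal_inv_of_pos hb, ENNReal.inv_lt_iff_inv_lt,
    ← ENNReal.ofReal_toReal (ENNReal.inv_ne_top.2 hρ.ne')]
  exact ENNReal.ofReal_lt_ofReal_iff hb |>.2 hρb

theorem statement15_general (u : ℕ → ℝ) (ρ : ℝ≥0∞) (hρ : 0 < ρ)
    (h1 : ∀ s : ℂ, (‖s‖₊ : ℝ≥0∞) < ρ → Summable (fun n : ℕ => (u n : ℂ) * s ^ n))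
    (z s : ℂ) (hz : 0 < z.re) (hs : (ρ⁻¹).toReal < s.re) :
    IntegrableOn (fun t : ℝ => (t : ℂ) ^ (z - 1) * Complex.exp (-s * t) * (ufun u (-t) : ℝ))
        (Set.Ioi (0 : ℝ)) ∧
    (∫ t in Set.Ioi (0 : ℝ),
        (t : ℂ) ^ (z - 1) * Complex.exp (-s * t) * (ufun u (-t) : ℝ))
      = Complex.Gamma z * ∑' n : ℕ, genBinom (-z) n * (u n : ℂ) * s ^ (-z - n) := by
  obtain ⟨b, hb, hbs, hbρ⟩ := ENNReal.exists_ofReal_inv_lt_of_inv_toReal_lt hρ hs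
  obtain ⟨A, hA⟩ := exists_norm_le_mul_inv_pow_of_summable (inv_pos.2 hb) (h1 _ (by
    rwa [Complex.nnnorm_real, ← enorm_eq_nnnorm, Real.enorm_eq_ofReal (inv_pos.2 hb).le]))
  set c : ℕ → ℂ := fun n => u n * (-1) ^ n / (n ! : ℂ)
  have hc n : ‖c n‖ ≤ A * b ^ n / n ! := by
    simpa [c, inv_inv] using div_le_div_of_nonneg_right (hA n) (Nat.cast_nonneg n !)
  have hu (t : ℝ) : ((ufun u (-t) : ℝ) : ℂ) = ∑' n, c n * (t : ℂ) ^ n := by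
    rw [ufun, Complex.ofReal_tsum]
    exact tsum_congr fun n => by push_cast; ring
  have hz' (k : ℕ) : z ≠ -k := fun h => by simp [h] at hz; linarith [k.cast_nonneg (α := ℝ)]
  have hcoeff n : c n * (Complex.Gamma (z + n) * s ^ (-(z + n)))
      = Complex.Gamma z * (genBinom (-z) n * u n * s ^ (-z - n)) := by
    rw [show -z - n = -(z + n) by ring]
    linear_combination -(u n * s ^ (-(z + n))) * Complex.Gamma_mul_genBinom_neg hz' n
  simp only [hu]
  refine ⟨integrableOn_cpow_mul_exp_neg_mul_mul_tsum hc hz hbs, ?_⟩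
  rw [← tsum_mul_left, ← tsum_congr hcoeff]
  exact (hasSum_integral_cpow_mul_exp_neg_mul_mul_tsum hc hb.le hz hbs).tsum_eq.symm

/-- a special case of Ramanujan's master theorem: if `∑ u_n s^n` has
radius of convergence `ρ > 0`, `Re z > 0` and `Re s > 1/ρ`, then
`∫_0^∞ t^{z−1} e^{−st} u(−t) dt` converges and equals `Γ(z) ∑ C(−z,n) u_n s^{−z−n}`. -/
theorem statement15 (u : ℕ → ℝ) (ρ : ℝ≥0∞) (hρ : 0 < ρ)
    (h1 : ∀ s : ℂ, (‖s‖₊ : ℝ≥0∞) < ρ → Summable (fun n : ℕ => (u n : ℂ) * s ^ n))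
    (h2 : ∀ s : ℂ, ρ < (‖s‖₊ : ℝ≥0∞) → ¬ Summable (fun n : ℕ => (u n : ℂ) * s ^ n))
    (z s : ℂ) (hz : 0 < z.re) (hs : (ρ⁻¹).toReal < s.re) :
    IntegrableOn (fun t : ℝ => (t : ℂ) ^ (z - 1) * Complex.exp (-s * t) * (ufun u (-t) : ℝ))
        (Set.Ioi (0 : ℝ)) ∧
    (∫ t in Set.Ioi (0 : ℝ),
        (t : ℂ) ^ (z - 1) * Complex.exp (-s * t) * (ufun u (-t) : ℝ))
      = Complex.Gamma z * ∑' n : ℕ, genBinom (-z) n * (u n : ℂ) * s ^ (-z - n) :=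
  statement15_general u ρ hρ h1 z s hz hs
end

section
/- For fixed s ∈ ℂ with s ∉ ℝ_{≤0} and |s| > 1/ρ_f, the function z ↦ s^{(z,f)} := s^z · Σ_{n=0}^∞ C(z,n) P_{f,n} s^{−n} is an entire function of z. -/
open scoped ENNReal NNReal

open scoped Nat
open Filter Finset Topology

/-!
For `‖z‖ ≤ R` one has `‖C(z,n)‖ ≤ R(R+1)⋯(R+n-1)/n!`, the coefficients of `(1-t)^{-R}`.
Choosing `r` with `1/‖s‖ < r < ρ`, the coefficients obey `‖P n‖ r^n ≤ M`, so the `n`-th term of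
the series is at most `M · R(R+1)⋯(R+n-1)/n! · t^n` with `t = 1/(‖s‖ r) < 1`. This majorant is
summable by the ratio test, so the series is a locally uniform limit of polynomials in `z`,
hence entire; and `z ↦ s^z` is entire because `s ≠ 0`.
-/

lemma norm_genBinom_le {z : ℂ} {R : ℝ} (hz : ‖z‖ ≤ R) (n : ℕ) :
    ‖genBinom z n‖ ≤ (∏ i ∈ range n, (R + i)) / n ! := by
  rw [genBinom, norm_div, norm_prod, Complex.norm_natCast]
  gcongr with i
  calc ‖z - i‖ ≤ ‖z‖ + ‖(i : ℂ)‖ := norm_sub_le _ _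
    _ ≤ R + i := by rw [Complex.norm_natCast]; gcongr

lemma differentiable_genBinom (n : ℕ) : Differentiable ℂ (genBinom · n) := by
  unfold genBinom
  fun_prop

lemma summable_prod_add_div_factorial_mul_pow {R t : ℝ} (hR : 0 ≤ R) (ht₀ : 0 ≤ t)
    (ht : t < 1) : Summable fun n : ℕ ↦ (∏ i ∈ range n, (R + i)) / n ! * t ^ n := by
  obtain ⟨r, htr, hr⟩ := exists_between ht
  refine summable_of_ratio_norm_eventually_le hr ?_
  have hratio : Tendsto (fun n : ℕ ↦ (R + n) / (n + 1) * t) atTop (𝓝 t) := by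
    simpa [add_comm (1 : ℝ)] using
      (tendsto_add_mul_div_add_mul_atTop_nhds R 1 1 one_ne_zero).mul_const t
  filter_upwards [hratio.eventually (gt_mem_nhds htr)] with n hn
  have hnonneg : 0 ≤ (∏ i ∈ range n, (R + i)) / n ! * t ^ n := by positivity
  have hstep : (∏ i ∈ range (n + 1), (R + i)) / (n + 1)! * t ^ (n + 1)
      = (∏ i ∈ range n, (R + i)) / n ! * t ^ n * ((R + n) / (n + 1) * t) := by
    rw [prod_range_succ, Nat.factorial_succ, Nat.cast_mul, pow_succ]
    field_simp
    push_cast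
    ring
  rw [hstep, Real.norm_of_nonneg (mul_nonneg hnonneg (by positivity)),
    Real.norm_of_nonneg hnonneg, mul_comm r]
  exact mul_le_mul_of_nonneg_left hn.le hnonneg

theorem differentiable_tsum_genBinom_mul_pow {a : ℕ → ℂ} {w : ℂ} {r M : ℝ} (hwr : ‖w‖ < r)
    (hM : ∀ n, ‖a n‖ * r ^ n ≤ M) :
    Differentiable ℂ fun z ↦ ∑' n, genBinom z n * a n * w ^ n := by
  have hr : 0 < r := (norm_nonneg w).trans_lt hwr
  have hM₀ : 0 ≤ M := (by positivity : 0 ≤ ‖a 0‖ * r ^ 0).trans (hM 0)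
  set t := ‖w‖ / r
  have hterm {z : ℂ} {R : ℝ} (hz : ‖z‖ ≤ R) (n : ℕ) :
      ‖genBinom z n * a n * w ^ n‖ ≤ M * ((∏ i ∈ range n, (R + i)) / n ! * t ^ n) := by
    have hw : ‖w‖ ^ n = r ^ n * t ^ n := by rw [← mul_pow, mul_div_cancel₀ _ hr.ne']
    calc ‖genBinom z n * a n * w ^ n‖ = ‖genBinom z n‖ * (‖a n‖ * r ^ n) * t ^ n := by
          rw [norm_mul, norm_mul, norm_pow, hw]; ring
      _ ≤ (∏ i ∈ range n, (R + i)) / n ! * M * t ^ n := by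
          have hb := norm_genBinom_le hz n
          gcongr
          exacts [(norm_nonneg _).trans hb, hM n]
      _ = _ := by ring
  intro z₀
  have hF : DifferentiableOn ℂ (fun z ↦ ∑' n, genBinom z n * a n * w ^ n)
      (Metric.ball 0 (‖z₀‖ + 1)) :=
    Complex.differentiableOn_tsum_of_summable_norm
      ((summable_prod_add_div_factorial_mul_pow (by positivity) (by positivity)
        ((div_lt_one hr).2 hwr)).mul_left M)
      (fun n ↦ (((differentiable_genBinom n).mul_const _).mul_const _).differentiableOn)
      Metric.isOpen_ball
      (fun n z hz ↦ hterm (R := ‖z₀‖ + 1) (by simpa using (Metric.mem_ball.1 hz).le) n)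
  exact hF.differentiableAt (Metric.isOpen_ball.mem_nhds (by simp))

lemma Summable.exists_norm_mul_pow_le {𝕜 : Type*} [NormedDivisionRing 𝕜] {a : ℕ → 𝕜} {x : 𝕜}
    (h : Summable fun n ↦ a n * x ^ n) : ∃ M, ∀ n, ‖a n‖ * ‖x‖ ^ n ≤ M := by
  obtain ⟨M, hM⟩ := h.tendsto_atTop_zero.norm.bddAbove_range
  exact ⟨M, fun n ↦ by simpa only [norm_mul, norm_pow] using hM (Set.mem_range_self n)⟩

lemma enorm_inv_lt_of_toReal_inv_lt {𝕜 : Type*} [NormedDivisionRing 𝕜] {ρ : ℝ≥0∞} (hρ : 0 < ρ)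
    {s : 𝕜} (hs : ρ⁻¹.toReal < ‖s‖) : ‖s⁻¹‖ₑ < ρ := by
  have hs₀ : s ≠ 0 := norm_pos_iff.1 (ENNReal.toReal_nonneg.trans_lt hs)
  rw [enorm_inv hs₀, ENNReal.inv_lt_iff_inv_lt, ← ofReal_norm,
    ← ENNReal.ofReal_toReal (ENNReal.inv_ne_top.2 hρ.ne')]
  exact (ENNReal.ofReal_lt_ofReal_iff (ENNReal.toReal_nonneg.trans_lt hs)).2 hs

theorem statement16_general (P : ℕ → ℝ)
    (ρ : ℝ≥0∞) (hρ : 0 < ρ)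
    (h1 : ∀ w : ℂ, (‖w‖₊ : ℝ≥0∞) < ρ → Summable (fun n : ℕ => (P n : ℂ) * w ^ n))
    (s : ℂ) (hs : (ρ⁻¹).toReal < ‖s‖) :
    Differentiable ℂ
      (fun z : ℂ => s ^ z * ∑' n : ℕ, genBinom z n * (P n : ℂ) * (s⁻¹) ^ n) := by
  have hs₀ : s ≠ 0 := norm_pos_iff.1 (ENNReal.toReal_nonneg.trans_lt hs)
  obtain ⟨r, hsr, hrρ⟩ :=
    ENNReal.lt_iff_exists_nnreal_btwn.1 (enorm_inv_lt_of_toReal_inv_lt hρ hs)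
  obtain ⟨M, hM⟩ := (h1 ((r : ℝ) : ℂ) (by simpa using hrρ)).exists_norm_mul_pow_le
  have hsr' : ‖s⁻¹‖ < r := by simpa [← ofReal_norm, ENNReal.ofReal_lt_iff_lt_toReal] using hsr
  exact (differentiable_id.const_cpow (.inl hs₀)).mul
    (differentiable_tsum_genBinom_mul_pow hsr' (by simpa using hM))

/-- let `P_n` be the P-numbers of `f` (i.e. the coefficients of
`p_f(t) = ((e^t−1)/t) f(t)`, related to the C-numbers `c` of `f` by
`(n+1) P_n = ∑_{k=0}^n (n+1 choose k) c_k`), and assume `∑ P_n s^n` has radius of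
convergence `ρ_f > 0`.  For a fixed `s ∉ ℝ_{≤0}` with `|s| > 1/ρ_f`, the function
`z ↦ s^{(z,f)} = s^z ∑ C(z,n) P_n s^{−n}` is entire. -/
theorem statement16 (c P : ℕ → ℝ)
    (hPC : ∀ n : ℕ, ((n : ℝ) + 1) * P n
      = ∑ k ∈ Finset.range (n + 1), ((n + 1).choose k : ℝ) * c k)
    (ρ : ℝ≥0∞) (hρ : 0 < ρ)
    (h1 : ∀ w : ℂ, (‖w‖₊ : ℝ≥0∞) < ρ → Summable (fun n : ℕ => (P n : ℂ) * w ^ n))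
    (h2 : ∀ w : ℂ, ρ < (‖w‖₊ : ℝ≥0∞) → ¬ Summable (fun n : ℕ => (P n : ℂ) * w ^ n))
    (s : ℂ) (hs0 : ¬ (s.im = 0 ∧ s.re ≤ 0)) (hs : (ρ⁻¹).toReal < ‖s‖) :
    Differentiable ℂ
      (fun z : ℂ => s ^ z * ∑' n : ℕ, genBinom z n * (P n : ℂ) * (s⁻¹) ^ n) :=
  statement16_general P ρ hρ h1 s hs
end

section
/- The series L(z,f) = Σ_{n=n_f}^∞ n^{(−z,f)} converges absolutely and uniformly on compact subsets of the half-plane Re(z) > 1, and hence defines an analytic function there. -/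
/-!
Let `N = n_f`. Since `1/N < ρ`, the coefficients satisfy `|P k| n^{-k} ≤ M r^k` for all
`n ≥ N` and some `r < 1`, while `‖C(-z,k)‖ ≤ C(R+k-1,k)` for `‖z‖ ≤ R`. So the inner series
of `n^{(-z,f)}` is dominated, uniformly in `n ≥ N`, by `M ∑ C(R+k-1,k) r^k = M (1-r)^{-R}`,
whence `‖n^{(-z,f)}‖ ≤ S(R) n^{-Re z}` on the ball of radius `R`. The Weierstrass M-test
with majorant `∑ n^{-a}`, `a = min_K Re z > 1`, gives absolute and locally uniform
convergence, and holomorphy passes to the locally uniform limit.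
-/

open scoped ENNReal NNReal Topology
open Filter

/-- `n_f = ⌊1/ρ⌋ + 1`. -/
noncomputable def nIdx (ρ : ℝ≥0∞) : ℕ := ⌊(ρ⁻¹).toReal⌋₊ + 1

/-- `n^{(−z,f)} = n^{−z} ∑_k C(−z,k) P_k n^{−k}`. -/
noncomputable def pTerm (P : ℕ → ℝ) (n : ℕ) (z : ℂ) : ℂ :=
  (n : ℂ) ^ (-z) * ∑' k : ℕ, genBinom (-z) k * (P k : ℂ) * ((n : ℂ)⁻¹) ^ k

/-- `risingBinom R k = C(R+k-1, k)`, the coefficients of `(1-x)^{-R}`. -/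
noncomputable def risingBinom (R : ℝ) (k : ℕ) : ℝ :=
  (∏ i ∈ Finset.range k, (R + i)) / k.factorial

section RisingBinom

variable {R r : ℝ}

lemma risingBinom_nonneg (hR : 0 ≤ R) (k : ℕ) : 0 ≤ risingBinom R k :=
  div_nonneg (Finset.prod_nonneg fun i _ => by positivity) (Nat.cast_nonneg _)

lemma risingBinom_succ (R : ℝ) (k : ℕ) :
    risingBinom R (k + 1) = risingBinom R k * ((R + k) / (k + 1)) := by
  simp only [risingBinom, Finset.prod_range_succ, Nat.factorial_succ, Nat.cast_mul,
    Nat.cast_add, Nat.cast_one]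
  field_simp

lemma norm_genBinom_neg_le {z : ℂ} (hz : ‖z‖ ≤ R) (k : ℕ) :
    ‖genBinom (-z) k‖ ≤ risingBinom R k := by
  rw [genBinom, risingBinom, norm_div, Complex.norm_natCast, norm_prod]
  gcongr with i
  calc ‖-z - i‖ = ‖z + i‖ := by rw [← norm_neg]; ring_nf
    _ ≤ ‖z‖ + i := by simpa using norm_add_le z (i : ℂ)
    _ ≤ R + i := by linarith

lemma summable_risingBinom_mul_pow (hR : 0 ≤ R) (hr0 : 0 ≤ r) (hr1 : r < 1) :
    Summable fun k => risingBinom R k * r ^ k := by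
  have hnonneg : ∀ k, 0 ≤ risingBinom R k * r ^ k :=
    fun k => mul_nonneg (risingBinom_nonneg hR k) (pow_nonneg hr0 k)
  -- The ratio of consecutive terms is `r (R + k) / (k + 1) → r < (1 + r) / 2`.
  refine summable_of_ratio_norm_eventually_le (r := (1 + r) / 2) (by linarith) ?_
  filter_upwards [eventually_ge_atTop ⌈2 * r * R / (1 - r)⌉₊] with k hk
  have hk' : 2 * r * R ≤ k * (1 - r) := (div_le_iff₀ (by linarith)).mp (Nat.ceil_le.mp hk)
  have hratio : r * ((R + k) / (k + 1)) ≤ (1 + r) / 2 := by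
    rw [mul_div_assoc', div_le_div_iff₀ (by positivity) two_pos]
    nlinarith
  rw [Real.norm_of_nonneg (hnonneg _), Real.norm_of_nonneg (hnonneg _), risingBinom_succ,
    pow_succ]
  calc risingBinom R k * ((R + k) / (k + 1)) * (r ^ k * r)
      = risingBinom R k * r ^ k * (r * ((R + k) / (k + 1))) := by ring
    _ ≤ risingBinom R k * r ^ k * ((1 + r) / 2) := by gcongr; exact hnonneg k
    _ = (1 + r) / 2 * (risingBinom R k * r ^ k) := mul_comm _ _

end RisingBinom

section PTerm

variable {P : ℕ → ℝ} {n : ℕ} {M r R : ℝ}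

lemma norm_genBinom_mul_le (hP : ∀ k, |P k| * ((n : ℝ)⁻¹) ^ k ≤ M * r ^ k) {z : ℂ}
    (hz : ‖z‖ ≤ R) (k : ℕ) :
    ‖genBinom (-z) k * P k * ((n : ℂ)⁻¹) ^ k‖ ≤ M * (risingBinom R k * r ^ k) := by
  rw [mul_assoc, norm_mul, norm_mul, norm_pow, norm_inv, Complex.norm_natCast,
    Complex.norm_real, Real.norm_eq_abs]
  calc _ ≤ risingBinom R k * (M * r ^ k) :=
        mul_le_mul (norm_genBinom_neg_le hz k) (hP k) (by positivity)
          (risingBinom_nonneg ((norm_nonneg z).trans hz) k)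
    _ = M * (risingBinom R k * r ^ k) := by ring

lemma norm_pTerm_le (hr0 : 0 ≤ r) (hr1 : r < 1)
    (hP : ∀ k, |P k| * ((n : ℝ)⁻¹) ^ k ≤ M * r ^ k) (hn : n ≠ 0) {z : ℂ} (hz : ‖z‖ ≤ R) :
    ‖pTerm P n z‖ ≤ (∑' k, M * (risingBinom R k * r ^ k)) * (n : ℝ) ^ (-z.re) := by
  have hsum := (summable_risingBinom_mul_pow ((norm_nonneg z).trans hz) hr0 hr1).mul_left M
  rw [pTerm, norm_mul, Complex.norm_natCast_cpow_of_pos (Nat.pos_of_ne_zero hn),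
    Complex.neg_re, mul_comm]
  gcongr
  exact tsum_of_norm_bounded hsum.hasSum (norm_genBinom_mul_le hP hz)

lemma differentiable_pTerm (hr0 : 0 ≤ r) (hr1 : r < 1)
    (hP : ∀ k, |P k| * ((n : ℝ)⁻¹) ^ k ≤ M * r ^ k) (hn : n ≠ 0) :
    Differentiable ℂ (pTerm P n) := by
  intro z₀
  have hpow : Differentiable ℂ fun z : ℂ => (n : ℂ) ^ (-z) :=
    differentiable_neg.const_cpow (Or.inl (Nat.cast_ne_zero.mpr hn))
  have hterm (k : ℕ) : Differentiable ℂ fun z => genBinom (-z) k * P k * ((n : ℂ)⁻¹) ^ k := by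
    unfold genBinom
    fun_prop
  have hball : DifferentiableOn ℂ
      (fun z => ∑' k, genBinom (-z) k * P k * ((n : ℂ)⁻¹) ^ k) (Metric.ball 0 (‖z₀‖ + 1)) :=
    Complex.differentiableOn_tsum_of_summable_norm
      ((summable_risingBinom_mul_pow (by positivity) hr0 hr1).mul_left M)
      (fun k => (hterm k).differentiableOn)
      Metric.isOpen_ball fun k z hz =>
        norm_genBinom_mul_le hP (mem_ball_zero_iff.mp hz).le k
  exact (hpow z₀).mul (hball.differentiableAt
    (Metric.isOpen_ball.mem_nhds (by simp)))

end PTerm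

lemma inv_nIdx_lt {ρ : ℝ≥0∞} (hρ : 0 < ρ) : (nIdx ρ : ℝ≥0∞)⁻¹ < ρ := by
  have hρinv : ρ⁻¹ ≠ ⊤ := ENNReal.inv_ne_top.mpr hρ.ne'
  rw [ENNReal.inv_lt_iff_inv_lt, ← ENNReal.toReal_lt_toReal hρinv (ENNReal.natCast_ne_top _),
    ENNReal.toReal_natCast, nIdx, Nat.cast_add_one]
  exact Nat.lt_floor_add_one _

lemma abs_mul_inv_pow_le {P : ℕ → ℝ} {N : ℕ} {w M : ℝ} (hN : N ≠ 0) (hw : 0 < w)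
    (hM : ∀ k, |P k| * w ^ k ≤ M) {n : ℕ} (hn : N ≤ n) (k : ℕ) :
    |P k| * ((n : ℝ)⁻¹) ^ k ≤ M * ((N * w)⁻¹) ^ k := by
  have hN0 : (0 : ℝ) < N := by positivity
  have hinv : (n : ℝ)⁻¹ ≤ w * (N * w)⁻¹ := by
    rw [mul_inv, mul_left_comm, mul_inv_cancel₀ hw.ne', mul_one]
    exact inv_anti₀ hN0 (by exact_mod_cast hn)
  calc |P k| * ((n : ℝ)⁻¹) ^ k ≤ |P k| * (w * (N * w)⁻¹) ^ k := by gcongr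
    _ = |P k| * w ^ k * ((N * w)⁻¹) ^ k := by ring
    _ ≤ M * ((N * w)⁻¹) ^ k := by gcongr; exact hM k

lemma exists_geometric_bound {P : ℕ → ℝ} {ρ : ℝ≥0∞} {N : ℕ} (hN : (N : ℝ≥0∞)⁻¹ < ρ)
    (hP : ∀ w : ℂ, (‖w‖₊ : ℝ≥0∞) < ρ → Summable (fun n : ℕ => (P n : ℂ) * w ^ n)) :
    ∃ M r : ℝ, 0 ≤ r ∧ r < 1 ∧ ∀ n, N ≤ n → ∀ k, |P k| * ((n : ℝ)⁻¹) ^ k ≤ M * r ^ k := by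
  obtain ⟨b, hNb, hbρ⟩ := exists_between hN
  have hb : b ≠ ⊤ := hbρ.ne_top
  have hN0 : N ≠ 0 := by rintro rfl; simp at hNb
  set w := b.toReal
  have hNw : (N : ℝ)⁻¹ < w := by
    simpa using (ENNReal.toReal_lt_toReal (by simpa using hN0) hb).mpr hNb
  have hw : 0 < w := (by positivity : (0 : ℝ) < (N : ℝ)⁻¹).trans hNw
  have hsum : Summable fun k => (P k : ℂ) * (w : ℂ) ^ k := by
    refine hP w ?_
    rwa [Complex.nnnorm_real, ← enorm_eq_nnnorm, Real.enorm_of_nonneg hw.le,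
      ENNReal.ofReal_toReal hb]
  obtain ⟨M, hM⟩ := hsum.tendsto_atTop_zero.norm.bddAbove_range
  have hM' (k : ℕ) : |P k| * w ^ k ≤ M := by
    simpa [abs_of_pos hw] using hM (Set.mem_range_self k)
  have hNw1 : 1 < N * w := by
    rwa [inv_lt_iff_one_lt_mul₀' (by positivity)] at hNw
  exact ⟨M, (N * w)⁻¹, by positivity, inv_lt_one_of_one_lt₀ hNw1,
    fun n hn k => abs_mul_inv_pow_le hN0 hw hM' hn k⟩

lemma summable_nat_add_rpow_neg (N : ℕ) {a : ℝ} (ha : 1 < a) :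
    Summable fun n : ℕ => ((N + n : ℕ) : ℝ) ^ (-a) := by
  simpa only [add_comm N] using
    (summable_nat_add_iff N).mpr (Real.summable_nat_rpow.mpr (by linarith : -a < -1))

section DirichletMajorant

variable {F : ℕ → ℂ → ℂ} {N : ℕ}
  (hF : ∀ R, ∃ S, ∀ z, ‖z‖ ≤ R → ∀ n, ‖F n z‖ ≤ S * ((N + n : ℕ) : ℝ) ^ (-z.re))
include hF

lemma summable_norm_of_norm_le_rpow {z : ℂ} (hz : 1 < z.re) : Summable fun n => ‖F n z‖ := by
  obtain ⟨S, hS⟩ := hF ‖z‖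
  exact .of_nonneg_of_le (fun n => norm_nonneg _) (hS z le_rfl)
    ((summable_nat_add_rpow_neg N hz).mul_left S)

lemma tendstoUniformlyOn_tsum_of_norm_le_rpow (hN : N ≠ 0) {K : Set ℂ}
    (hK : K ⊆ {z | 1 < z.re}) (hKc : IsCompact K) :
    TendstoUniformlyOn (fun M z => ∑ n ∈ Finset.range M, F n z) (fun z => ∑' n, F n z)
      atTop K := by
  rcases K.eq_empty_or_nonempty with rfl | hne
  · exact tendstoUniformlyOn_empty
  obtain ⟨R, hR⟩ := hKc.isBounded.exists_norm_le
  obtain ⟨S, hS⟩ := hF R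
  obtain ⟨z₀, hz₀, hmin⟩ := hKc.exists_isMinOn hne Complex.continuous_re.continuousOn
  refine tendstoUniformlyOn_tsum_nat ((summable_nat_add_rpow_neg N (hK hz₀)).mul_left S)
    fun n z hz => (hS z (hR z hz) n).trans ?_
  have hS0 : 0 ≤ S := nonneg_of_mul_nonneg_left ((norm_nonneg _).trans (hS z (hR z hz) n))
    (by positivity)
  have hbase : (1 : ℝ) ≤ (N + n : ℕ) := by exact_mod_cast Nat.one_le_iff_ne_zero.mpr (by omega)
  exact mul_le_mul_of_nonneg_left (Real.rpow_le_rpow_of_exponent_le hbase (neg_le_neg (hmin hz)))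
    hS0

lemma differentiableOn_tsum_of_norm_le_rpow (hN : N ≠ 0)
    (hd : ∀ n, DifferentiableOn ℂ (F n) {z | 1 < z.re}) :
    DifferentiableOn ℂ (fun z => ∑' n, F n z) {z | 1 < z.re} := by
  have hU : IsOpen {z : ℂ | 1 < z.re} := isOpen_lt continuous_const Complex.continuous_re
  have hloc : TendstoLocallyUniformlyOn (fun M z => ∑ n ∈ Finset.range M, F n z)
      (fun z => ∑' n, F n z) atTop {z | 1 < z.re} :=
    (tendstoLocallyUniformlyOn_iff_forall_isCompact hU).mpr fun K hK hKc =>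
      tendstoUniformlyOn_tsum_of_norm_le_rpow hF hN hK hKc
  exact hloc.differentiableOn (.of_forall fun M => .fun_sum fun n _ => hd n) hU

end DirichletMajorant

theorem statement17_general (P : ℕ → ℝ)
    (ρ : ℝ≥0∞) (hρ : 0 < ρ)
    (h1 : ∀ w : ℂ, (‖w‖₊ : ℝ≥0∞) < ρ → Summable (fun n : ℕ => (P n : ℂ) * w ^ n)) :
    (∀ z : ℂ, 1 < z.re → Summable (fun n : ℕ => ‖pTerm P (nIdx ρ + n) z‖)) ∧
    (∀ K : Set ℂ, K ⊆ {z : ℂ | 1 < z.re} → IsCompact K →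
      TendstoUniformlyOn
        (fun (N : ℕ) (z : ℂ) => ∑ n ∈ Finset.range N, pTerm P (nIdx ρ + n) z)
        (fun z : ℂ => ∑' n : ℕ, pTerm P (nIdx ρ + n) z) atTop K) ∧
    AnalyticOn ℂ (fun z : ℂ => ∑' n : ℕ, pTerm P (nIdx ρ + n) z) {z : ℂ | 1 < z.re} := by
  obtain ⟨M, r, hr0, hr1, hP⟩ := exists_geometric_bound (inv_nIdx_lt hρ) h1
  have hN : nIdx ρ ≠ 0 := Nat.succ_ne_zero _
  have hF : ∀ R, ∃ S, ∀ z, ‖z‖ ≤ R → ∀ n,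
      ‖pTerm P (nIdx ρ + n) z‖ ≤ S * ((nIdx ρ + n : ℕ) : ℝ) ^ (-z.re) :=
    fun R => ⟨_, fun z hz n => norm_pTerm_le hr0 hr1 (hP _ (Nat.le_add_right _ n)) (by omega) hz⟩
  have hd : ∀ n, DifferentiableOn ℂ (pTerm P (nIdx ρ + n)) {z | 1 < z.re} := fun n =>
    (differentiable_pTerm hr0 hr1 (hP _ (Nat.le_add_right _ n)) (by omega)).differentiableOn
  exact ⟨fun z => summable_norm_of_norm_le_rpow hF,
    fun K => tendstoUniformlyOn_tsum_of_norm_le_rpow hF hN,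
    (differentiableOn_tsum_of_norm_le_rpow hF hN hd).analyticOn
      (isOpen_lt continuous_const Complex.continuous_re)⟩

/-- the series `L(z,f) = ∑_{n ≥ n_f} n^{(−z,f)}` converges absolutely for
`Re z > 1`, converges uniformly on every compact subset of the half-plane `Re z > 1`,
and defines an analytic function there.  Here the `P_n` are the P-numbers of `f`
(related to the C-numbers `c` by `(n+1) P_n = ∑ (n+1 choose k) c_k`), with `∑ P_n s^n`
of radius of convergence `ρ > 0`, and `n_f = ⌊1/ρ⌋ + 1`. -/
theorem statement17 (c P : ℕ → ℝ)
    (hPC : ∀ n : ℕ, ((n : ℝ) + 1) * P n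
      = ∑ k ∈ Finset.range (n + 1), ((n + 1).choose k : ℝ) * c k)
    (ρ : ℝ≥0∞) (hρ : 0 < ρ)
    (h1 : ∀ w : ℂ, (‖w‖₊ : ℝ≥0∞) < ρ → Summable (fun n : ℕ => (P n : ℂ) * w ^ n))
    (h2 : ∀ w : ℂ, ρ < (‖w‖₊ : ℝ≥0∞) → ¬ Summable (fun n : ℕ => (P n : ℂ) * w ^ n)) :
    (∀ z : ℂ, 1 < z.re → Summable (fun n : ℕ => ‖pTerm P (nIdx ρ + n) z‖)) ∧
    (∀ K : Set ℂ, K ⊆ {z : ℂ | 1 < z.re} → IsCompact K →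
      TendstoUniformlyOn
        (fun (N : ℕ) (z : ℂ) => ∑ n ∈ Finset.range N, pTerm P (nIdx ρ + n) z)
        (fun z : ℂ => ∑' n : ℕ, pTerm P (nIdx ρ + n) z) atTop K) ∧
    AnalyticOn ℂ (fun z : ℂ => ∑' n : ℕ, pTerm P (nIdx ρ + n) z) {z : ℂ | 1 < z.re} :=
  statement17_general P ρ hρ h1
end
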